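/- arXiv:0803.3553 — 2 statements merged into one kernel-verified Lean document; each statement's English description precedes it below -/
import Mathlib

section
/- Let a_1, ..., a_m be elements of L = GF(2^n) and k_1, ..., k_m positive integers, and set Q(x) = \sum_{i=1}^m a_i x^{2^{k_i}+1} and L(u) = \sum_{i=1}^m ( a_i u^{2^{k_i}} + a_i^{2^{-k_i}} u^{2^{-k_i}} ). Then ( \sum_{x \in L} (-1)^{Tr(Q(x))} )^2 equals either 0 or 2^n \cdot |K|, where K = { u \in L : L(u) = 0 }. -/
/-!
Write `ψ x = (-1)^{Tr x}`. Since Frobenius preserves the trace,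
`Tr (a x^{2^k} u) = Tr (x a^{2^{-k}} u^{2^{-k}})`, so
`Tr Q(x + u) = Tr Q(x) + Tr Q(u) + Tr (x L(u))`.
Substituting `y = x + u` in `S² = ∑_{x,y} ψ(Q x) ψ(Q y)` and summing over `x` first kills
every `u ∉ K = ker L`, which leaves `S² = 2^n ∑_{u ∈ K} ψ(Q u)`. On `K` the map
`u ↦ Tr Q(u)` is additive, so the last sum is `|K|` or `0`.
-/

noncomputable instance {n : ℕ} : Fintype (GaloisField 2 n) := Fintype.ofFinite _

/-- `ipow j x` is `x^{2^{-j}}`, the unique element of `GF(2^n)` whose `2^j`-th power is `x`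
(the inverse of the `j`-th iterate of the Frobenius automorphism). -/
noncomputable def ipow {n : ℕ} (j : ℕ) (x : GaloisField 2 n) : GaloisField 2 n :=
  Function.invFun (fun y : GaloisField 2 n => y ^ 2 ^ j) x

open Finset

def signChar : AddChar (ZMod 2) ℤ where
  toFun a := if a = 0 then 1 else -1
  map_zero_eq_one' := rfl
  map_add_eq_mul' := by decide

lemma signChar_mul_self : ∀ a : ZMod 2, signChar a * signChar a = 1 := by decide

lemma signChar_of_ne_zero : ∀ a : ZMod 2, a ≠ 0 → signChar a = -1 := by decide

lemma add_pow_two_pow_add_one {R : Type*} [CommRing R] [CharP R 2] (x u : R) (k : ℕ) :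
    (x + u) ^ (2 ^ k + 1) =
      x ^ (2 ^ k + 1) + u ^ (2 ^ k + 1) + (x ^ 2 ^ k * u + x * u ^ 2 ^ k) := by
  rw [pow_succ, add_pow_char_pow]
  ring

section TraceSign

variable {F : Type*} [Field F] [Algebra (ZMod 2) F]

noncomputable def traceSign : AddChar F ℤ :=
  signChar.compAddMonoidHom (Algebra.trace (ZMod 2) F).toAddMonoidHom

lemma traceSign_apply (x : F) : traceSign x = signChar (Algebra.trace (ZMod 2) F x) := rfl

variable [Fintype F]

lemma trace_pow_two_pow (x : F) (j : ℕ) :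
    Algebra.trace (ZMod 2) F (x ^ 2 ^ j) = Algebra.trace (ZMod 2) F x := by
  have h := Algebra.trace_eq_of_algEquiv
    (FiniteField.frobeniusAlgEquivOfAlgebraic (ZMod 2) F ^ j) x
  rwa [AlgEquiv.coe_pow, FiniteField.coe_frobeniusAlgEquivOfAlgebraic_iterate, ZMod.card] at h

lemma traceSign_ne_one : (traceSign : AddChar F ℤ) ≠ 1 := by
  obtain ⟨w, hw⟩ := Algebra.trace_surjective (ZMod 2) F 1
  intro h
  have := DFunLike.congr_fun h w
  rw [traceSign_apply, hw, AddChar.one_apply] at this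
  exact absurd this (by decide)

lemma sum_traceSign_mul [DecidableEq F] (c : F) :
    ∑ x : F, traceSign (x * c) = if c = 0 then (Fintype.card F : ℤ) else 0 := by
  exact_mod_cast AddChar.sum_mulShift c (AddChar.IsPrimitive.of_ne_one traceSign_ne_one)

end TraceSign

section QuadraticForm

variable {F : Type*} [Field F] [Algebra (ZMod 2) F]

def HasTracePolar (Q : F → F) (L : F →+ F) : Prop :=
  ∀ x u, Algebra.trace (ZMod 2) F (Q (x + u)) = Algebra.trace (ZMod 2) F (Q x) +
    Algebra.trace (ZMod 2) F (Q u) + Algebra.trace (ZMod 2) F (x * L u)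

variable {Q : F → F} {L : F →+ F}

lemma traceSign_comp_add (hQ : HasTracePolar Q L) (x u : F) :
    traceSign (Q (x + u)) = traceSign (Q x) * traceSign (Q u) * traceSign (x * L u) := by
  simp only [traceSign_apply, hQ x u, AddChar.map_add_eq_mul]

variable [Fintype F] [DecidableEq F]

theorem sq_sum_traceSign_eq_card_mul_sum_ker (hQ : HasTracePolar Q L) :
    (∑ x, traceSign (Q x)) ^ 2 =
      Fintype.card F * ∑ u ∈ univ.filter (L · = 0), traceSign (Q u) := by
  calc (∑ x, traceSign (Q x)) ^ 2
      = ∑ x, ∑ u, traceSign (Q x) * traceSign (Q (x + u)) := by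
        rw [sq, sum_mul_sum]
        exact sum_congr rfl fun x _ => (Equiv.sum_comp (Equiv.addLeft x) _).symm
    _ = ∑ u, traceSign (Q u) * ∑ x, traceSign (x * L u) := by
        rw [sum_comm]
        refine sum_congr rfl fun u _ => ?_
        rw [mul_sum]
        refine sum_congr rfl fun x _ => ?_
        rw [traceSign_comp_add hQ, ← mul_assoc, ← mul_assoc, traceSign_apply, signChar_mul_self,
          one_mul]
    _ = ∑ u, if L u = 0 then Fintype.card F * traceSign (Q u) else 0 := by
        refine sum_congr rfl fun u _ => ?_
        rw [sum_traceSign_mul]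
        split_ifs <;> ring
    _ = _ := by rw [← sum_filter, mul_sum]

theorem sum_traceSign_ker_eq_zero_or (hQ : HasTracePolar Q L) :
    ∑ u ∈ univ.filter (L · = 0), traceSign (Q u) = 0 ∨
      ∑ u ∈ univ.filter (L · = 0), traceSign (Q u) = #(univ.filter (L · = 0)) := by
  set K := univ.filter (L · = 0)
  by_cases hK : ∀ u ∈ K, Algebra.trace (ZMod 2) F (Q u) = 0
  · right
    rw [sum_congr rfl fun u hu => by rw [traceSign_apply, hK u hu, AddChar.map_zero_eq_one],
      sum_const, nsmul_one]
  · left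
    push Not at hK
    obtain ⟨v, hvK, hv⟩ := hK
    have hLv : L v = 0 := (mem_filter.1 hvK).2
    have hmem : ∀ u, u + v ∈ K ↔ u ∈ K := fun u => by simp [K, hLv]
    have hflip : ∀ u ∈ K, traceSign (Q (u + v)) = -traceSign (Q u) := fun u _ => by
      rw [traceSign_comp_add hQ, hLv, mul_zero, AddChar.map_zero_eq_one, mul_one,
        traceSign_apply (Q v), signChar_of_ne_zero _ hv, mul_neg_one]
    have hshift : ∑ u ∈ K, traceSign (Q u) = ∑ u ∈ K, traceSign (Q (u + v)) :=
      (sum_equiv (Equiv.addRight v) (fun u => (hmem u).symm) fun _ _ => rfl).symm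
    rw [sum_congr rfl hflip, sum_neg_distrib] at hshift
    linarith

theorem sq_sum_traceSign_eq_zero_or (hQ : HasTracePolar Q L) :
    (∑ x, traceSign (Q x)) ^ 2 = 0 ∨
      (∑ x, traceSign (Q x)) ^ 2 = Fintype.card F * #(univ.filter (L · = 0)) := by
  rw [sq_sum_traceSign_eq_card_mul_sum_ker hQ]
  rcases sum_traceSign_ker_eq_zero_or hQ with h | h <;> rw [h] <;> simp

end QuadraticForm

section GaloisField

variable {n : ℕ}

lemma ipow_pow (j : ℕ) (x : GaloisField 2 n) : ipow j x ^ 2 ^ j = x :=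
  Function.rightInverse_invFun (bijective_iterateFrobenius (GaloisField 2 n) 2 j).2 x

lemma ipow_add (j : ℕ) (x y : GaloisField 2 n) : ipow j (x + y) = ipow j x + ipow j y := by
  apply (bijective_iterateFrobenius (GaloisField 2 n) 2 j).1
  simp only [iterateFrobenius_def, add_pow_char_pow, ipow_pow]

lemma trace_mul_pow_two_pow_mul (a x u : GaloisField 2 n) (k : ℕ) :
    Algebra.trace (ZMod 2) _ (a * (x ^ 2 ^ k * u)) =
      Algebra.trace (ZMod 2) _ (x * (ipow k a * ipow k u)) := by
  rw [← trace_pow_two_pow (x * _) k, mul_pow, mul_pow, ipow_pow, ipow_pow]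
  ring_nf

lemma card_galoisField (hn : n ≠ 0) : Fintype.card (GaloisField 2 n) = 2 ^ n := by
  rw [Fintype.card_eq_nat_card, GaloisField.card 2 n hn]

variable {ι : Type*} [Fintype ι] (a : ι → GaloisField 2 n) (k : ι → ℕ)

noncomputable def quadForm (x : GaloisField 2 n) : GaloisField 2 n :=
  ∑ i, a i * x ^ (2 ^ k i + 1)

noncomputable def polarMap : GaloisField 2 n →+ GaloisField 2 n :=
  AddMonoidHom.mk' (fun u => ∑ i, (a i * u ^ 2 ^ k i + ipow (k i) (a i) * ipow (k i) u))
    fun u v => by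
      simp only [← sum_add_distrib, add_pow_char_pow, ipow_add]
      exact sum_congr rfl fun i _ => by ring

lemma hasTracePolar_quadForm : HasTracePolar (quadForm a k) (polarMap a k) := by
  intro x u
  have hexpand : quadForm a k (x + u) = quadForm a k x + quadForm a k u +
      ∑ i, (a i * (x ^ 2 ^ k i * u) + x * (a i * u ^ 2 ^ k i)) := by
    simp only [quadForm, add_pow_two_pow_add_one, ← sum_add_distrib]
    exact sum_congr rfl fun i _ => by ring
  rw [hexpand, map_add, map_add, polarMap, AddMonoidHom.mk'_apply, mul_sum, map_sum, map_sum]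
  congr 1
  refine sum_congr rfl fun i _ => ?_
  rw [map_add, trace_mul_pow_two_pow_mul, mul_add, map_add, add_comm]

end GaloisField

open scoped Classical in
theorem stmt_9_general (n m : ℕ) (hn : 0 < n) (a : Fin m → GaloisField 2 n) (kk : Fin m → ℕ) :
    (∑ x : GaloisField 2 n,
        if Algebra.trace (ZMod 2) (GaloisField 2 n)
            (∑ i, a i * x ^ (2 ^ kk i + 1)) = 0 then (1 : ℤ) else -1) ^ 2 = 0 ∨
      (∑ x : GaloisField 2 n,
          if Algebra.trace (ZMod 2) (GaloisField 2 n)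
              (∑ i, a i * x ^ (2 ^ kk i + 1)) = 0 then (1 : ℤ) else -1) ^ 2 =
        2 ^ n *
          ((Finset.univ.filter (fun u : GaloisField 2 n =>
              (∑ i, (a i * u ^ 2 ^ kk i + ipow (kk i) (a i) * ipow (kk i) u)) = 0)).card : ℤ) := by
  have h := sq_sum_traceSign_eq_zero_or (hasTracePolar_quadForm a kk)
  rw [card_galoisField hn.ne'] at h
  exact_mod_cast h

open scoped Classical in
/-- With `Q(x) = ∑ aᵢ x^{2^{kᵢ}+1}` and `L(u) = ∑ (aᵢ u^{2^{kᵢ}} + aᵢ^{2^{-kᵢ}} u^{2^{-kᵢ}})`,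
the square of `∑_x (-1)^{Tr(Q(x))}` equals `0` or `2^n |K|` where `K = ker L`. -/
theorem stmt_9 (n m : ℕ) (hn : 0 < n) (a : Fin m → GaloisField 2 n) (kk : Fin m → ℕ)
    (hkk : ∀ i, 0 < kk i) :
    (∑ x : GaloisField 2 n,
        if Algebra.trace (ZMod 2) (GaloisField 2 n)
            (∑ i, a i * x ^ (2 ^ kk i + 1)) = 0 then (1 : ℤ) else -1) ^ 2 = 0 ∨
      (∑ x : GaloisField 2 n,
          if Algebra.trace (ZMod 2) (GaloisField 2 n)
              (∑ i, a i * x ^ (2 ^ kk i + 1)) = 0 then (1 : ℤ) else -1) ^ 2 =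
        2 ^ n *
          ((Finset.univ.filter (fun u : GaloisField 2 n =>
              (∑ i, (a i * u ^ 2 ^ kk i + ipow (kk i) (a i) * ipow (kk i) u)) = 0)).card : ℤ) :=
  stmt_9_general n m hn a kk
end

section
/- Let a, b, c be elements of L = GF(2^n) and k a positive integer. Define G(u) = a u^{2^k+1} + b u^{2^{3k}+1} + b^{2^{-k}} u^{2^{2k}+2^{-k}} + b^{2^{-2k}} u^{2^k+2^{-2k}} + c u^{2^{5k}+1} + c^{2^{-k}} u^{2^{4k}+2^{-k}} + c^{2^{-2k}} u^{2^{3k}+2^{-2k}} + c^{2^{-3k}} u^{2^{2k}+2^{-3k}} + c^{2^{-4k}} u^{2^k+2^{-4k}} and L(u) = a u^{2^k} + a^{2^{-k}} u^{2^{-k}} + b u^{2^{3k}} + b^{2^{-3k}} u^{2^{-3k}} + c u^{2^{5k}} + c^{2^{-5k}} u^{2^{-5k}}. Then for every u in L one has G(u) + G(u)^{2^{-k}} = u \cdot L(u). -/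
private lemma gf_bij {n : ℕ} (j : ℕ) :
    Function.Bijective (fun y : GaloisField 2 n => y ^ 2 ^ j) := by
  have h : (fun y : GaloisField 2 n => y ^ 2 ^ j) = (frobenius (GaloisField 2 n) 2)^[j] := by
    funext y
    induction j with
    | zero => simp
    | succ j ih =>
        rw [Function.iterate_succ_apply', ← ih, frobenius_def, pow_succ, pow_mul]
  rw [h]
  exact (PerfectRing.bijective_frobenius (R := GaloisField 2 n) (p := 2)).iterate j

private lemma gf_rpow {n : ℕ} (j : ℕ) (x : GaloisField 2 n) : ipow j x ^ 2 ^ j = x :=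
  Function.rightInverse_invFun (gf_bij j).2 x

private lemma gf_lpow {n : ℕ} (j : ℕ) (x : GaloisField 2 n) : ipow j (x ^ 2 ^ j) = x :=
  Function.leftInverse_invFun (gf_bij j).1 x

private lemma gf_add {n : ℕ} (j : ℕ) (x y : GaloisField 2 n) :
    ipow j (x + y) = ipow j x + ipow j y := by
  apply (gf_bij (n := n) j).1
  show ipow j (x + y) ^ 2 ^ j = (ipow j x + ipow j y) ^ 2 ^ j
  rw [gf_rpow, add_pow_char_pow, gf_rpow, gf_rpow]

private lemma gf_mul {n : ℕ} (j : ℕ) (x y : GaloisField 2 n) :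
    ipow j (x * y) = ipow j x * ipow j y := by
  apply (gf_bij (n := n) j).1
  show ipow j (x * y) ^ 2 ^ j = (ipow j x * ipow j y) ^ 2 ^ j
  rw [gf_rpow, mul_pow, gf_rpow, gf_rpow]

private lemma gf_ipow_ipow {n : ℕ} (i j : ℕ) (x : GaloisField 2 n) :
    ipow i (ipow j x) = ipow (i + j) x := by
  apply (gf_bij (n := n) (i + j)).1
  show ipow i (ipow j x) ^ 2 ^ (i + j) = ipow (i + j) x ^ 2 ^ (i + j)
  rw [gf_rpow (i + j), pow_add, pow_mul, gf_rpow, gf_rpow]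

private lemma gf_ipow_pow {n : ℕ} (j m : ℕ) (x : GaloisField 2 n) :
    ipow j (x ^ 2 ^ (m + j)) = x ^ 2 ^ m := by
  rw [pow_add, pow_mul, gf_lpow]

/-- The key identity `G(u) + G(u)^{2^{-k}} = u·L(u)` from the proof of Theorem 2. -/
theorem stmt_12 (n k : ℕ) (hn : 0 < n) (hk : 0 < k) (a b c : GaloisField 2 n)
    (u : GaloisField 2 n) :
    (a * u ^ (2 ^ k + 1) + b * u ^ (2 ^ (3 * k) + 1) +
        ipow k b * (u ^ 2 ^ (2 * k) * ipow k u) +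
        ipow (2 * k) b * (u ^ 2 ^ k * ipow (2 * k) u) +
        c * u ^ (2 ^ (5 * k) + 1) +
        ipow k c * (u ^ 2 ^ (4 * k) * ipow k u) +
        ipow (2 * k) c * (u ^ 2 ^ (3 * k) * ipow (2 * k) u) +
        ipow (3 * k) c * (u ^ 2 ^ (2 * k) * ipow (3 * k) u) +
        ipow (4 * k) c * (u ^ 2 ^ k * ipow (4 * k) u)) +
      ipow k
        (a * u ^ (2 ^ k + 1) + b * u ^ (2 ^ (3 * k) + 1) +
        ipow k b * (u ^ 2 ^ (2 * k) * ipow k u) +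
        ipow (2 * k) b * (u ^ 2 ^ k * ipow (2 * k) u) +
        c * u ^ (2 ^ (5 * k) + 1) +
        ipow k c * (u ^ 2 ^ (4 * k) * ipow k u) +
        ipow (2 * k) c * (u ^ 2 ^ (3 * k) * ipow (2 * k) u) +
        ipow (3 * k) c * (u ^ 2 ^ (2 * k) * ipow (3 * k) u) +
        ipow (4 * k) c * (u ^ 2 ^ k * ipow (4 * k) u)) =
      u *
        (a * u ^ 2 ^ k + ipow k a * ipow k u + b * u ^ 2 ^ (3 * k) +
        ipow (3 * k) b * ipow (3 * k) u + c * u ^ 2 ^ (5 * k) +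
        ipow (5 * k) c * ipow (5 * k) u) := by
  have e1 : ipow k (u ^ 2 ^ k) = u := gf_lpow k u
  have e2 : ipow k (u ^ 2 ^ (2 * k)) = u ^ 2 ^ k := by
    have h : 2 * k = k + k := by ring
    rw [h]; exact gf_ipow_pow k k u
  have e3 : ipow k (u ^ 2 ^ (3 * k)) = u ^ 2 ^ (2 * k) := by
    have h : 3 * k = 2 * k + k := by ring
    rw [h]; exact gf_ipow_pow k (2 * k) u
  have e4 : ipow k (u ^ 2 ^ (4 * k)) = u ^ 2 ^ (3 * k) := by
    have h : 4 * k = 3 * k + k := by ring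
    rw [h]; exact gf_ipow_pow k (3 * k) u
  have e5 : ipow k (u ^ 2 ^ (5 * k)) = u ^ 2 ^ (4 * k) := by
    have h : 5 * k = 4 * k + k := by ring
    rw [h]; exact gf_ipow_pow k (4 * k) u
  have i2 : ∀ x : GaloisField 2 n, ipow k (ipow k x) = ipow (2 * k) x := by
    intro x; rw [gf_ipow_ipow]; ring_nf
  have i3 : ∀ x : GaloisField 2 n, ipow k (ipow (2 * k) x) = ipow (3 * k) x := by
    intro x; rw [gf_ipow_ipow]; ring_nf
  have i4 : ∀ x : GaloisField 2 n, ipow k (ipow (3 * k) x) = ipow (4 * k) x := by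
    intro x; rw [gf_ipow_ipow]; ring_nf
  have i5 : ∀ x : GaloisField 2 n, ipow k (ipow (4 * k) x) = ipow (5 * k) x := by
    intro x; rw [gf_ipow_ipow]; ring_nf
  have h2 : (2 : GaloisField 2 n) = 0 := by
    have := CharP.cast_eq_zero (GaloisField 2 n) 2
    exact_mod_cast this
  simp only [pow_add, pow_one, gf_add, gf_mul, e1, e2, e3, e4, e5, i2, i3, i4, i5]
  ring_nf
  simp [h2]
end
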